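/- arXiv:1811.03698 — 2 statements merged into one kernel-verified Lean document; each statement's English description precedes it below -/
import Mathlib

section
/- Let H be a Hilbert algebra, A an implicative semilattice, and h : H → A a homomorphism into the {→,1}-reduct of A. Then there is a unique implicative-semilattice homomorphism h̄ : L(H) → A with h = h̄ ∘ φ_H, where L(H) = (⟨φ_H[H]⟩, ∩, ⇒, X(H)). Consequently, the functor L : Hil → IS is left adjoint to the forgetful functor IS → Hil. -/
namespace FH

variable {H : Type*}

/-- Hilbert algebra axioms for `(imp, one)`. -/
def IsHilbert (imp : H → H → H) (one : H) : Prop :=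
  (∀ a b : H, imp a (imp b a) = one) ∧
  (∀ a b c : H, imp (imp a (imp b c)) (imp (imp a b) (imp a c)) = one) ∧
  (∀ a b : H, imp a b = one → imp b a = one → a = b)

/-- The natural order of a Hilbert algebra. -/
def hle (imp : H → H → H) (one : H) (a b : H) : Prop := imp a b = one

/-- Implicative filter. -/
def IsImpFilter (imp : H → H → H) (one : H) (F : Set H) : Prop :=
  one ∈ F ∧ ∀ a b : H, a ∈ F → imp a b ∈ F → b ∈ F

/-- Irreducible implicative filter. -/
def IsIrr (imp : H → H → H) (one : H) (F : Set H) : Prop :=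
  IsImpFilter imp one F ∧ F ≠ Set.univ ∧
    ∀ F1 F2 : Set H, IsImpFilter imp one F1 → IsImpFilter imp one F2 →
      F = F1 ∩ F2 → (F = F1 ∨ F = F2)

/-- `φ(a) = {P ∈ X(H) : a ∈ P}`. -/
def phi (imp : H → H → H) (one : H) (a : H) : Set (Set H) :=
  {P | IsIrr imp one P ∧ a ∈ P}

/-- `X(H)`, the set of irreducible implicative filters. -/
def XH (imp : H → H → H) (one : H) : Set (Set H) := {P | IsIrr imp one P}

/-- Upsets of the poset `(X(H), ⊆)`. -/
def IsUp (imp : H → H → H) (one : H) (U : Set (Set H)) : Prop :=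
  (∀ P ∈ U, IsIrr imp one P) ∧
    ∀ P Q : Set H, P ∈ U → IsIrr imp one Q → P ⊆ Q → Q ∈ U

/-- Heyting implication `U ⇒ V` on upsets of `X(H)` (the complement relative to
`X(H)` of the downset generated by `U ∩ Vᶜ`). -/
def himp (imp : H → H → H) (one : H) (U V : Set (Set H)) : Set (Set H) :=
  {P | IsIrr imp one P ∧ ∀ Q : Set H, IsIrr imp one Q → P ⊆ Q → Q ∈ U → Q ∈ V}

/-- Frontal operator on a Hilbert algebra. -/
def IsFrontal (imp : H → H → H) (one : H) (t : H → H) : Prop :=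
  (∀ a b : H, hle imp one (t (imp a b)) (imp (t a) (t b))) ∧
  (∀ a : H, hle imp one a (t a)) ∧
  (∀ a b : H, hle imp one (t a) (imp (imp (imp b a) b) b))

/-- The elements of `⟨φ[H]⟩`: finite (nonempty) intersections `φ(a₁) ∩ ⋯ ∩ φ(aₙ)`. -/
def gen (imp : H → H → H) (one : H) (U : Set (Set H)) : Prop :=
  ∃ l : List H, l ≠ [] ∧ U = {P | IsIrr imp one P ∧ ∀ a ∈ l, a ∈ P}

/-- The π-extension `τ^π` of a unary map `t` to the upsets of `X(H)`. -/
def tpi (imp : H → H → H) (one : H) (t : H → H) (U : Set (Set H)) : Set (Set H) :=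
  {P | IsIrr imp one P ∧ ∀ Q : Set H, IsIrr imp one Q → t ⁻¹' P ⊆ Q → Q ∈ U}

/-- Maximal elements (w.r.t. inclusion) of a family of sets. -/
def Mx (S : Set (Set H)) : Set (Set H) := {P ∈ S | ∀ Q ∈ S, P ⊆ Q → P = Q}

/-- Relative complement in `X(H)`. -/
def Xc (imp : H → H → H) (one : H) (U : Set (Set H)) : Set (Set H) :=
  {P | IsIrr imp one P ∧ P ∉ U}

/-- Downset (within `X(H)`) generated by a family `S`. -/
def dn (imp : H → H → H) (one : H) (S : Set (Set H)) : Set (Set H) :=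
  {P | IsIrr imp one P ∧ ∃ Q ∈ S, P ⊆ Q}

/-- Implicative semilattice axioms for `(inf, imp, one)`. -/
def IsImpSL (inf : H → H → H) (imp : H → H → H) (one : H) : Prop :=
  (∀ a b : H, inf a b = inf b a) ∧
  (∀ a b c : H, inf (inf a b) c = inf a (inf b c)) ∧
  (∀ a : H, inf a a = a) ∧
  (∀ a : H, inf a one = a) ∧
  (∀ a b c : H, inf (inf a b) c = inf a b ↔ inf a (imp b c) = a)

/-- The semilattice order: `a ≤ b` iff `a ∧ b = a`. -/
def sle (inf : H → H → H) (a b : H) : Prop := inf a b = a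

end FH

/-!
An element of `L(H)` is a finite intersection `φ(a₁) ∩ ⋯ ∩ φ(aₙ)`, and `h̄` must send it to
`h a₁ ∧ ⋯ ∧ h aₙ`, which gives uniqueness. That this is well defined, and commutes with `⇒`,
rests on the prime filter theorem for Hilbert algebras: `φ(a₁) ∩ ⋯ ∩ φ(aₙ) ⊆ φ(b)` iff `b` lies
in the implicative filter generated by the `aᵢ`, and by the deduction theorem that filter
consists of the `b` with `a₁ → (⋯ → (aₙ → b)) = 1`. Since the preimage under `h` of a
principal filter of `B` is an implicative filter, `h a₁ ∧ ⋯ ∧ h aₙ ≤ h b` for all such `b`.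
-/

namespace FH

variable {H : Type*} {imp : H → H → H} {one : H}

def filterGen (imp : H → H → H) (one : H) (S : Set H) : Set H :=
  ⋂₀ {F | IsImpFilter imp one F ∧ S ⊆ F}

lemma isImpFilter_filterGen (S : Set H) : IsImpFilter imp one (filterGen imp one S) :=
  ⟨Set.mem_sInter.2 fun _ hF => hF.1.1,
    fun a b ha hab => Set.mem_sInter.2 fun F hF => hF.1.2 a b (ha F hF) (hab F hF)⟩

lemma subset_filterGen (S : Set H) : S ⊆ filterGen imp one S :=
  fun _ ha _ hF => hF.2 ha

lemma filterGen_subset {S F : Set H} (hF : IsImpFilter imp one F) (hSF : S ⊆ F) :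
    filterGen imp one S ⊆ F :=
  Set.sInter_subset_of_mem ⟨hF, hSF⟩

lemma filterGen_mono {S T : Set H} (hST : S ⊆ T) : filterGen imp one S ⊆ filterGen imp one T :=
  filterGen_subset (isImpFilter_filterGen T) (hST.trans (subset_filterGen T))

lemma IsImpFilter.filterGen_eq {F : Set H} (hF : IsImpFilter imp one F) :
    filterGen imp one F = F :=
  (filterGen_subset hF subset_rfl).antisymm (subset_filterGen F)

/-- The deduction theorem. -/
lemma imp_mem_filterGen_iff (hH : IsHilbert imp one) {S : Set H} {a b : H} :
    imp a b ∈ filterGen imp one S ↔ b ∈ filterGen imp one (insert a S) := by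
  set F := filterGen imp one S
  have hF : IsImpFilter imp one F := isImpFilter_filterGen S
  refine ⟨fun hab => (isImpFilter_filterGen _).2 a b (subset_filterGen _ (Set.mem_insert a S))
    (filterGen_mono (Set.subset_insert a S) hab), fun hb => ?_⟩
  have hK : ∀ x y, imp x (imp y x) ∈ F := fun x y => hH.1 x y ▸ hF.1
  have hS : ∀ x y z, imp (imp x (imp y z)) (imp (imp x y) (imp x z)) ∈ F :=
    fun x y z => hH.2.1 x y z ▸ hF.1
  have hlift : ∀ x ∈ F, imp a x ∈ F := fun x hx => hF.2 _ _ hx (hK x a)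
  have hmp : ∀ x y, imp a x ∈ F → imp a (imp x y) ∈ F → imp a y ∈ F :=
    fun x y hx hxy => hF.2 _ _ hx (hF.2 _ _ hxy (hS a x y))
  have hself : imp a a ∈ F := hmp _ _ (hK a a) (hK a (imp a a))
  have hsub : filterGen imp one (insert a S) ⊆ {x | imp a x ∈ F} :=
    filterGen_subset ⟨hlift one hF.1, hmp⟩
      (Set.insert_subset hself fun s hs => hlift s (subset_filterGen S hs))
  exact hsub hb

lemma foldr_imp_mem_filterGen_iff (hH : IsHilbert imp one) {b : H} :
    ∀ {S : Set H} {l : List H},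
      l.foldr imp b ∈ filterGen imp one S ↔ b ∈ filterGen imp one (S ∪ {x | x ∈ l})
  | S, [] => by simp
  | S, a :: t => by
    rw [List.foldr_cons, imp_mem_filterGen_iff hH, foldr_imp_mem_filterGen_iff hH]
    congr! 2
    ext x
    simp [or_assoc, or_left_comm]

lemma isImpFilter_sUnion {c : Set (Set H)} (hc : ∀ F ∈ c, IsImpFilter imp one F)
    (hchain : IsChain (· ⊆ ·) c) (hne : c.Nonempty) : IsImpFilter imp one (⋃₀ c) := by
  obtain ⟨F, hF⟩ := hne
  refine ⟨⟨F, hF, (hc F hF).1⟩, ?_⟩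
  rintro a b ⟨F₁, hF₁, ha⟩ ⟨F₂, hF₂, hab⟩
  rcases hchain.total hF₁ hF₂ with h12 | h21
  · exact ⟨F₂, hF₂, (hc F₂ hF₂).2 a b (h12 ha) hab⟩
  · exact ⟨F₁, hF₁, (hc F₁ hF₁).2 a b ha (h21 hab)⟩

lemma IsImpFilter.exists_isIrr_of_notMem {F : Set H} (hF : IsImpFilter imp one F) {b : H}
    (hb : b ∉ F) : ∃ P, IsIrr imp one P ∧ F ⊆ P ∧ b ∉ P := by
  obtain ⟨P, hFP, hmax⟩ := zorn_subset_nonempty {G | IsImpFilter imp one G ∧ b ∉ G}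
    (fun c hc hchain hne => ⟨⋃₀ c,
      ⟨isImpFilter_sUnion (fun G hG => (hc hG).1) hchain hne,
        fun ⟨G, hG, hbG⟩ => (hc hG).2 hbG⟩,
      fun _ => Set.subset_sUnion_of_mem⟩) F ⟨hF, hb⟩
  obtain ⟨hP, hbP⟩ := hmax.prop
  refine ⟨P, ⟨hP, fun hu => hbP (hu ▸ Set.mem_univ b), fun F₁ F₂ hF₁ hF₂ hP₁₂ => ?_⟩, hFP, hbP⟩
  -- `b` lies in every filter strictly above `P`, so it would lie in `F₁ ∩ F₂` if both were.
  by_contra! hne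
  have hb₁ : b ∈ F₁ := by_contra fun hb₁ =>
    hne.1 (hmax.eq_of_subset ⟨hF₁, hb₁⟩ (hP₁₂ ▸ Set.inter_subset_left))
  have hb₂ : b ∈ F₂ := by_contra fun hb₂ =>
    hne.2 (hmax.eq_of_subset ⟨hF₂, hb₂⟩ (hP₁₂ ▸ Set.inter_subset_right))
  exact hbP (hP₁₂ ▸ ⟨hb₁, hb₂⟩)

/-- The prime filter theorem. -/
lemma mem_filterGen_iff {S : Set H} {b : H} :
    b ∈ filterGen imp one S ↔ ∀ P, IsIrr imp one P → S ⊆ P → b ∈ P := by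
  refine ⟨fun hb P hP hSP => filterGen_subset hP.1 hSP hb, fun hb => ?_⟩
  by_contra hbS
  obtain ⟨P, hP, hSP, hbP⟩ := (isImpFilter_filterGen S).exists_isIrr_of_notMem hbS
  exact hbP (hb P hP ((subset_filterGen S).trans hSP))

lemma IsIrr.foldr_imp_mem_iff (hH : IsHilbert imp one) {P : Set H} (hP : IsIrr imp one P)
    {l : List H} {b : H} :
    l.foldr imp b ∈ P ↔ ∀ Q, IsIrr imp one Q → P ⊆ Q → (∀ a ∈ l, a ∈ Q) → b ∈ Q := by
  conv_lhs => rw [← hP.1.filterGen_eq]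
  rw [foldr_imp_mem_filterGen_iff hH, mem_filterGen_iff]
  simp only [Set.union_subset_iff, Set.ofPred_subset, and_imp]

def phiList (imp : H → H → H) (one : H) (l : List H) : Set (Set H) :=
  {P | IsIrr imp one P ∧ ∀ a ∈ l, a ∈ P}

lemma gen_phiList {l : List H} (hl : l ≠ []) : gen imp one (phiList imp one l) :=
  ⟨l, hl, rfl⟩

lemma gen_iff {U : Set (Set H)} : gen imp one U ↔ ∃ l, l ≠ [] ∧ U = phiList imp one l :=
  Iff.rfl

lemma phiList_append (l₁ l₂ : List H) :
    phiList imp one (l₁ ++ l₂) = phiList imp one l₁ ∩ phiList imp one l₂ := by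
  ext P
  simp only [phiList, Set.mem_inter_iff, Set.mem_ofPred_eq, List.mem_append, or_imp, forall_and]
  tauto

lemma phiList_singleton (a : H) : phiList imp one [a] = phi imp one a := by
  simp [phiList, phi]

lemma phi_one : phi imp one one = XH imp one := by
  ext
  exact ⟨And.left, fun hP => ⟨hP, hP.1.1⟩⟩

lemma mem_filterGen_of_phiList_subset {l₁ l₂ : List H}
    (hsub : phiList imp one l₁ ⊆ phiList imp one l₂) {b : H} (hb : b ∈ l₂) :
    b ∈ filterGen imp one {x | x ∈ l₁} :=
  mem_filterGen_iff.2 fun _ hP hl₁ => (hsub ⟨hP, hl₁⟩).2 b hb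

lemma himp_phiList (hH : IsHilbert imp one) (l₁ l₂ : List H) :
    himp imp one (phiList imp one l₁) (phiList imp one l₂) =
      phiList imp one (l₂.map (l₁.foldr imp ·)) := by
  ext P
  simp only [himp, phiList, Set.mem_ofPred_eq, List.forall_mem_map]
  refine and_congr_right fun hP => ?_
  simp only [hP.foldr_imp_mem_iff hH]
  constructor
  · exact fun h b hb Q hQ hPQ hl₁ => (h Q hQ hPQ ⟨hQ, hl₁⟩).2 b hb
  · exact fun h Q hQ hPQ hl₁ => ⟨hQ, fun b hb => h b hb Q hQ hPQ hl₁.2⟩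

section Lift

variable {B : Type*} [SemilatticeInf B] [OrderTop B] {imp' : B → B → B}

lemma isImpFilter_preimage_Ici (hres : ∀ a b c : B, a ⊓ b ≤ c ↔ a ≤ imp' b c) {h : H → B}
    (hone : h one = ⊤) (hhom : ∀ a b : H, h (imp a b) = imp' (h a) (h b)) (c : B) :
    IsImpFilter imp one (h ⁻¹' Set.Ici c) := by
  refine ⟨by simp [hone], fun a b (ha : c ≤ h a) (hab : c ≤ h (imp a b)) => ?_⟩
  rw [hhom, ← hres] at hab
  exact (le_inf le_rfl ha).trans hab

lemma inf_map_le_inf_map_of_phiList_subset (hres : ∀ a b c : B, a ⊓ b ≤ c ↔ a ≤ imp' b c)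
    {h : H → B} (hone : h one = ⊤) (hhom : ∀ a b : H, h (imp a b) = imp' (h a) (h b))
    {l₁ l₂ : List H}
    (hsub : phiList imp one l₁ ⊆ phiList imp one l₂) :
    ((l₁ : Multiset H).map h).inf ≤ ((l₂ : Multiset H).map h).inf := by
  refine Multiset.le_inf.2 fun _ hy => ?_
  obtain ⟨b, hb, rfl⟩ := Multiset.mem_map.1 hy
  refine filterGen_subset (isImpFilter_preimage_Ici hres hone hhom _) (fun a ha => ?_)
    (mem_filterGen_of_phiList_subset hsub (Multiset.mem_coe.1 hb))
  exact Multiset.inf_le (Multiset.mem_map_of_mem h (Multiset.mem_coe.2 ha))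

lemma le_apply_foldr_imp_iff (hres : ∀ a b c : B, a ⊓ b ≤ c ↔ a ≤ imp' b c) {h : H → B}
    (hhom : ∀ a b : H, h (imp a b) = imp' (h a) (h b)) (b : H) :
    ∀ (l : List H) (c : B), c ≤ h (l.foldr imp b) ↔ c ⊓ ((l : Multiset H).map h).inf ≤ h b
  | [], c => by simp
  | a :: t, c => by
    rw [List.foldr_cons, hhom, ← hres, le_apply_foldr_imp_iff hres hhom b t, ← Multiset.cons_coe,
      Multiset.map_cons, Multiset.inf_cons, inf_assoc]

lemma inf_map_foldr_imp (hres : ∀ a b c : B, a ⊓ b ≤ c ↔ a ≤ imp' b c) {h : H → B}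
    (hhom : ∀ a b : H, h (imp a b) = imp' (h a) (h b)) (l₁ l₂ : List H) :
    ((↑(l₂.map (l₁.foldr imp ·)) : Multiset H).map h).inf =
      imp' ((l₁ : Multiset H).map h).inf ((l₂ : Multiset H).map h).inf := by
  refine eq_of_forall_le_iff fun c => ?_
  simp only [Multiset.le_inf, Multiset.forall_mem_map_iff, Multiset.mem_coe, List.mem_map,
    forall_exists_index, and_imp, forall_apply_eq_imp_iff₂, le_apply_foldr_imp_iff hres hhom,
    ← hres]

noncomputable def lift (h : H → B) (U : {U : Set (Set H) // gen imp one U}) : B :=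
  ((U.2.choose : Multiset H).map h).inf

lemma lift_eq (hres : ∀ a b c : B, a ⊓ b ≤ c ↔ a ≤ imp' b c) {h : H → B}
    (hone : h one = ⊤) (hhom : ∀ a b : H, h (imp a b) = imp' (h a) (h b)) {U : Set (Set H)}
    (hU : gen imp one U) {l : List H} (hl : U = phiList imp one l) :
    lift h ⟨U, hU⟩ = ((l : Multiset H).map h).inf := by
  have hchoose : U = phiList imp one hU.choose := hU.choose_spec.2
  exact le_antisymm
    (inf_map_le_inf_map_of_phiList_subset hres hone hhom (hchoose ▸ hl ▸ subset_rfl))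
    (inf_map_le_inf_map_of_phiList_subset hres hone hhom (hl ▸ hchoose ▸ subset_rfl))

lemma apply_eq_inf_of_eq_phiList {h : H → B} {g : {U : Set (Set H) // gen imp one U} → B}
    (hinter : ∀ (U V : Set (Set H)) (hU : gen imp one U) (hV : gen imp one V)
      (hUV : gen imp one (U ∩ V)), g ⟨U ∩ V, hUV⟩ = g ⟨U, hU⟩ ⊓ g ⟨V, hV⟩)
    (hphi : ∀ (a : H) (ha : gen imp one (phi imp one a)), g ⟨phi imp one a, ha⟩ = h a) :
    ∀ {a : H} {t : List H} {U : Set (Set H)} (hU : gen imp one U),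
      U = phiList imp one (a :: t) → g ⟨U, hU⟩ = ((↑(a :: t) : Multiset H).map h).inf
  | a, [], U, hU, hUl => by
    obtain rfl : U = phi imp one a := hUl.trans (phiList_singleton a)
    simpa using hphi a hU
  | a, b :: t, U, hU, hUl => by
    obtain rfl : U = phi imp one a ∩ phiList imp one (b :: t) :=
      hUl.trans ((phiList_singleton a).symm ▸ phiList_append [a] (b :: t))
    rw [hinter _ _ (gen_iff.2 ⟨[a], List.cons_ne_nil a [], (phiList_singleton a).symm⟩)
      (gen_phiList (List.cons_ne_nil b t)), hphi,
      apply_eq_inf_of_eq_phiList hinter hphi _ rfl]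
    simp

theorem existsUnique_lift (hH : IsHilbert imp one)
    (hres : ∀ a b c : B, a ⊓ b ≤ c ↔ a ≤ imp' b c) (h : H → B) (hone : h one = ⊤)
    (hhom : ∀ a b : H, h (imp a b) = imp' (h a) (h b)) :
    ∃! hbar : {U : Set (Set H) // gen imp one U} → B,
      (∀ (U V : Set (Set H)) (hU : gen imp one U) (hV : gen imp one V)
          (hUV : gen imp one (U ∩ V)),
          hbar ⟨U ∩ V, hUV⟩ = hbar ⟨U, hU⟩ ⊓ hbar ⟨V, hV⟩) ∧
      (∀ (U V : Set (Set H)) (hU : gen imp one U) (hV : gen imp one V)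
          (hUV : gen imp one (himp imp one U V)),
          hbar ⟨himp imp one U V, hUV⟩ = imp' (hbar ⟨U, hU⟩) (hbar ⟨V, hV⟩)) ∧
      (∀ hX : gen imp one (XH imp one), hbar ⟨XH imp one, hX⟩ = ⊤) ∧
      (∀ (a : H) (ha : gen imp one (phi imp one a)), hbar ⟨phi imp one a, ha⟩ = h a) := by
  refine ⟨lift h, ⟨?_, ?_, ?_, ?_⟩, ?_⟩
  · intro U V hU hV hUV
    obtain ⟨l₁, -, rfl⟩ := gen_iff.1 hU
    obtain ⟨l₂, -, rfl⟩ := gen_iff.1 hV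
    rw [lift_eq hres hone hhom hUV (phiList_append l₁ l₂).symm, lift_eq hres hone hhom _ rfl,
      lift_eq hres hone hhom _ rfl, ← Multiset.coe_add, Multiset.map_add, Multiset.inf_add]
  · intro U V hU hV hUV
    obtain ⟨l₁, -, rfl⟩ := gen_iff.1 hU
    obtain ⟨l₂, -, rfl⟩ := gen_iff.1 hV
    rw [lift_eq hres hone hhom hUV (himp_phiList hH l₁ l₂), lift_eq hres hone hhom _ rfl,
      lift_eq hres hone hhom _ rfl, inf_map_foldr_imp hres hhom]
  · intro hX
    rw [lift_eq hres hone hhom hX ((phiList_singleton one).trans phi_one).symm]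
    simp [hone]
  · intro a ha
    rw [lift_eq hres hone hhom ha (phiList_singleton a).symm]
    simp
  · rintro g ⟨hinter, -, -, hphi⟩
    funext ⟨U, hU⟩
    obtain ⟨l, hl, hUl⟩ := gen_iff.1 hU
    obtain ⟨a, t, rfl⟩ := List.exists_cons_of_ne_nil hl
    rw [apply_eq_inf_of_eq_phiList hinter hphi hU hUl, lift_eq hres hone hhom hU hUl]

end Lift

end FH

/-- Universal property of `L(H)`: for a Hilbert algebra `H`, an implicative
semilattice `B`, and a Hilbert homomorphism `h : H → B` into the `{→,1}`-reduct
of `B`, there is a unique implicative-semilattice homomorphism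
`h̄ : L(H) → B` with `h = h̄ ∘ φ_H`.  (This says that `L` is left adjoint to the
forgetful functor from implicative semilattices to Hilbert algebras.) -/
theorem stmt_6 {H B : Type*} (imp : H → H → H) (one : H)
    (hH : FH.IsHilbert imp one)
    (inf' : B → B → B) (imp' : B → B → B) (one' : B)
    (hS : FH.IsImpSL inf' imp' one')
    (h : H → B) (hone : h one = one')
    (hhom : ∀ a b : H, h (imp a b) = imp' (h a) (h b)) :
    ∃! hbar : {U : Set (Set H) // FH.gen imp one U} → B,
      (∀ (U V : Set (Set H)) (hU : FH.gen imp one U) (hV : FH.gen imp one V)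
          (hUV : FH.gen imp one (U ∩ V)),
          hbar ⟨U ∩ V, hUV⟩ = inf' (hbar ⟨U, hU⟩) (hbar ⟨V, hV⟩)) ∧
      (∀ (U V : Set (Set H)) (hU : FH.gen imp one U) (hV : FH.gen imp one V)
          (hUV : FH.gen imp one (FH.himp imp one U V)),
          hbar ⟨FH.himp imp one U V, hUV⟩ = imp' (hbar ⟨U, hU⟩) (hbar ⟨V, hV⟩)) ∧
      (∀ hX : FH.gen imp one (FH.XH imp one), hbar ⟨FH.XH imp one, hX⟩ = one') ∧
      (∀ (a : H) (ha : FH.gen imp one (FH.phi imp one a)),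
          hbar ⟨FH.phi imp one a, ha⟩ = h a) := by
  let : SemilatticeInf B := @SemilatticeInf.mk' B ⟨inf'⟩ hS.1 hS.2.1 hS.2.2.1
  let : OrderTop B := { top := one', le_top := fun a => (hS.1 one' a).trans (hS.2.2.2.1 a) }
  have hres : ∀ a b c : B, a ⊓ b ≤ c ↔ a ≤ imp' b c := fun a b c => by
    change inf' c (inf' a b) = inf' a b ↔ inf' (imp' b c) a = a
    rw [hS.1 c, hS.1 (imp' b c)]
    exact hS.2.2.2.2 a b c
  exact FH.existsUnique_lift hH hres h hone hhom
end

section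
/- Let (H, G) be a bounded Hilbert algebra with a Gabbay function. Then on the implicative semilattice L(H) of finite intersections of sets φ(a), the extension G^π satisfies G^π(U) = U ∪ (¬¬U ∩ (U^c)_M) for every U ∈ L(H), and G^π is a Gabbay function on L(H): G^π(U) ⊆ ¬¬U and G^π(U) ⇒ U ⊆ ¬¬U ⇒ U. -/
/-!
Everything is computed pointwise on irreducible filters. Writing `U = φ(a₁) ∩ ⋯ ∩ φ(aₙ)`,
the prime filter theorem applied to the filter `G⁻¹ P` gives `G^π(U) = φ(G a₁) ∩ ⋯ ∩ φ(G aₙ)`,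
and `φ(a → b) = φ(a) ⇒ φ(b)` together with `¬¬(V ∩ W) = ¬¬V ∩ ¬¬W` gives
`¬¬U = φ(¬¬a₁) ∩ ⋯ ∩ φ(¬¬aₙ)`; so `G^π(U) ⊆ ¬¬U` is the first Gabbay inequality.
By the Peirce-type axiom of a frontal operator, an irreducible `P ∋ G a` has no proper
extension to a filter omitting `a`; hence a point of `G^π(U)` outside `U` is maximal in `Uᶜ`.
Conversely, a maximal point `P` of `Uᶜ` that lies in `¬¬U` contains every `G aᵢ`: either
`G aᵢ → aᵢ ∈ P`, and then `aᵢ ∈ P` by the second Gabbay inequality, or some proper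
irreducible extension of `P` contains `G aᵢ` but not `aᵢ`, which maximality forbids.
Finally, since `U` is a finite intersection, Zorn's lemma puts every point of `Uᶜ` below a
maximal one, which yields `G^π(U) ⇒ U ⊆ ¬¬U ⇒ U`.
-/

namespace FH

variable {H : Type*} {imp : H → H → H} {one zero : H}

namespace IsHilbert

theorem mp (hH : IsHilbert imp one) {a b : H} (hab : imp a b = one) (ha : a = one) :
    b = one := by
  rw [ha] at hab
  have hb : imp b one = one := by simpa only [hab] using hH.1 b one
  exact (hH.2.2 one b hab hb).symm

theorem imp_self (hH : IsHilbert imp one) (a : H) : imp a a = one :=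
  hH.mp (hH.mp (hH.2.1 a (imp one a) a) (hH.1 a (imp one a))) (hH.1 a one)

theorem imp_one (hH : IsHilbert imp one) (a : H) : imp a one = one :=
  hH.imp_self a ▸ hH.1 a a

theorem imp_trans (hH : IsHilbert imp one) {a b c : H} (hab : imp a b = one)
    (hbc : imp b c = one) : imp a c = one :=
  hH.mp (hH.mp (hH.2.1 a b c) (by rw [hbc, hH.imp_one])) hab

theorem imp_swap (hH : IsHilbert imp one) {a b c : H} (h : imp a (imp b c) = one) :
    imp b (imp a c) = one :=
  hH.imp_trans (hH.1 b a) (hH.mp (hH.2.1 a b c) h)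

theorem prefixing (hH : IsHilbert imp one) (a b c : H) :
    imp (imp b c) (imp (imp a b) (imp a c)) = one :=
  hH.imp_trans (hH.1 (imp b c) a) (hH.2.1 a b c)

theorem suffixing (hH : IsHilbert imp one) (a b c : H) :
    imp (imp a b) (imp (imp b c) (imp a c)) = one :=
  hH.imp_swap (hH.prefixing a b c)

end IsHilbert

theorem IsImpFilter.mem_of_imp_eq_one {F : Set H} (hF : IsImpFilter imp one F) {a b : H}
    (ha : a ∈ F) (hab : imp a b = one) : b ∈ F :=
  hF.2 a b ha (hab ▸ hF.1)

theorem IsImpFilter.preimage {g : H → H}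
    (hg₁ : ∀ a b : H, hle imp one (g (imp a b)) (imp (g a) (g b)))
    (hg₂ : ∀ a : H, hle imp one a (g a)) {F : Set H} (hF : IsImpFilter imp one F) :
    IsImpFilter imp one (g ⁻¹' F) :=
  ⟨hF.mem_of_imp_eq_one hF.1 (hg₂ one),
    fun a b ha hab => hF.2 _ _ ha (hF.mem_of_imp_eq_one hab (hg₁ a b))⟩

/-- The filter generated by `F ∪ {a}` (deduction theorem). -/
def adjoin (imp : H → H → H) (F : Set H) (a : H) : Set H := {b | imp a b ∈ F}

namespace IsImpFilter

variable {F : Set H}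

theorem adjoin (hH : IsHilbert imp one) (hF : IsImpFilter imp one F) (a : H) :
    IsImpFilter imp one (FH.adjoin imp F a) :=
  ⟨show imp a one ∈ F by rw [hH.imp_one]; exact hF.1,
    fun b c hb hbc => hF.2 _ _ hb (hF.mem_of_imp_eq_one hbc (hH.2.1 a b c))⟩

theorem subset_adjoin (hH : IsHilbert imp one) (hF : IsImpFilter imp one F) (a : H) :
    F ⊆ FH.adjoin imp F a :=
  fun b hb => hF.mem_of_imp_eq_one hb (hH.1 b a)

theorem self_mem_adjoin (hH : IsHilbert imp one) (hF : IsImpFilter imp one F) (a : H) :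
    a ∈ FH.adjoin imp F a :=
  show imp a a ∈ F by rw [hH.imp_self]; exact hF.1

theorem sUnion {c : Set (Set H)} (hc : IsChain (· ⊆ ·) c) (hne : c.Nonempty)
    (h : ∀ G ∈ c, IsImpFilter imp one G) : IsImpFilter imp one (⋃₀ c) := by
  refine ⟨hne.elim fun G hG => ⟨G, hG, (h G hG).1⟩, ?_⟩
  rintro a b ⟨G₁, hG₁, ha⟩ ⟨G₂, hG₂, hab⟩
  rcases hc.total hG₁ hG₂ with h₁₂ | h₂₁
  · exact ⟨G₂, hG₂, (h G₂ hG₂).2 a b (h₁₂ ha) hab⟩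
  · exact ⟨G₁, hG₁, (h G₁ hG₁).2 a b ha (h₂₁ hab)⟩

theorem exists_maximal (hF : IsImpFilter imp one F) {s : Set H} (hs : s.Finite)
    (hsF : ¬s ⊆ F) :
    ∃ M, F ⊆ M ∧ Maximal (fun G => IsImpFilter imp one G ∧ ¬s ⊆ G) M := by
  refine zorn_subset_nonempty {G | IsImpFilter imp one G ∧ ¬s ⊆ G} (fun c hcS hc hne => ⟨⋃₀ c,
    ⟨sUnion hc hne fun G hG => (hcS hG).1, fun hsc => ?_⟩,
    fun G => Set.subset_sUnion_of_mem⟩) F ⟨hF, hsF⟩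
  obtain ⟨G, hG, hsG⟩ := hc.directedOn.exists_mem_subset_of_finite_of_subset_sUnion hne hs hsc
  exact (hcS hG).2 hsG

end IsImpFilter

theorem isIrr_of_maximal {s M : Set H}
    (hM : Maximal (fun G => IsImpFilter imp one G ∧ ¬s ⊆ G) M) : IsIrr imp one M := by
  refine ⟨hM.prop.1, fun h => hM.prop.2 (h ▸ Set.subset_univ s), fun F₁ F₂ h₁ h₂ hM₁₂ => ?_⟩
  by_contra! hne
  have hs₁ : s ⊆ F₁ := by
    by_contra hs
    exact hne.1 (hM.eq_of_subset ⟨h₁, hs⟩ (hM₁₂ ▸ Set.inter_subset_left))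
  have hs₂ : s ⊆ F₂ := by
    by_contra hs
    exact hne.2 (hM.eq_of_subset ⟨h₂, hs⟩ (hM₁₂ ▸ Set.inter_subset_right))
  exact hM.prop.2 (hM₁₂ ▸ Set.subset_inter hs₁ hs₂)

namespace IsImpFilter

variable {F : Set H}

theorem exists_isIrr (hF : IsImpFilter imp one F) {c : H} (hc : c ∉ F) :
    ∃ P, IsIrr imp one P ∧ F ⊆ P ∧ c ∉ P := by
  obtain ⟨M, hFM, hM⟩ := hF.exists_maximal (Set.finite_singleton c) (by simpa using hc)
  exact ⟨M, isIrr_of_maximal hM, hFM, by simpa using hM.prop.2⟩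

theorem exists_isIrr_of_imp_notMem (hH : IsHilbert imp one) (hF : IsImpFilter imp one F)
    {a b : H} (hab : imp a b ∉ F) : ∃ P, IsIrr imp one P ∧ F ⊆ P ∧ a ∈ P ∧ b ∉ P := by
  obtain ⟨P, hP, hFP, hb⟩ := (hF.adjoin hH a).exists_isIrr (c := b) hab
  exact ⟨P, hP, (hF.subset_adjoin hH a).trans hFP, hFP (hF.self_mem_adjoin hH a), hb⟩

end IsImpFilter

namespace IsIrr

variable {P : Set H}

theorem zero_notMem (hbot : ∀ a : H, imp zero a = one) (hP : IsIrr imp one P) : zero ∉ P :=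
  fun hz => hP.2.1 (Set.eq_univ_of_forall fun a => hP.1.mem_of_imp_eq_one hz (hbot a))

theorem exists_imp_mem_imp_mem (hH : IsHilbert imp one) (hP : IsIrr imp one P) {a b : H}
    (ha : a ∉ P) (hb : b ∉ P) : ∃ c ∉ P, imp a c ∈ P ∧ imp b c ∈ P := by
  have hsub : P ⊆ adjoin imp P a ∩ adjoin imp P b :=
    Set.subset_inter (hP.1.subset_adjoin hH a) (hP.1.subset_adjoin hH b)
  have hne : P ≠ adjoin imp P a ∩ adjoin imp P b := fun h => by
    rcases hP.2.2 _ _ (hP.1.adjoin hH a) (hP.1.adjoin hH b) h with h | h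
    · exact ha (h ▸ hP.1.self_mem_adjoin hH a)
    · exact hb (h ▸ hP.1.self_mem_adjoin hH b)
  obtain ⟨c, hc, hcP⟩ := Set.exists_of_ssubset (hsub.ssubset_of_ne hne)
  exact ⟨c, hcP, hc⟩

theorem mem_or_imp_mem (hH : IsHilbert imp one) {g : H → H}
    (hg₃ : ∀ a b : H, hle imp one (g a) (imp (imp (imp b a) b) b))
    (hP : IsIrr imp one P) {a : H} (hga : g a ∈ P) (b : H) : b ∈ P ∨ imp b a ∈ P := by
  by_contra! h
  obtain ⟨c, hcP, hbc, hbac⟩ := hP.exists_imp_mem_imp_mem hH h.1 h.2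
  -- `b → c` and `(b → a) → c` yield `(c → a) → c`; with `g a ∈ P`, Peirce's law for `c` is in `P`.
  have hcac : imp (imp c a) c ∈ P := hP.1.2 _ _ hbac <| hP.1.mem_of_imp_eq_one hbc <|
    hH.imp_trans (hH.suffixing b c a) (hH.suffixing _ _ c)
  exact hcP (hP.1.2 _ _ hcac (hP.1.mem_of_imp_eq_one hga (hg₃ a c)))

theorem eq_of_subset (hH : IsHilbert imp one) {g : H → H}
    (hg₃ : ∀ a b : H, hle imp one (g a) (imp (imp (imp b a) b) b))
    (hP : IsIrr imp one P) {Q : Set H} (hQ : IsImpFilter imp one Q) (hPQ : P ⊆ Q) {a : H}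
    (hga : g a ∈ P) (haQ : a ∉ Q) : P = Q :=
  hPQ.antisymm fun b hb => (hP.mem_or_imp_mem hH hg₃ hga b).resolve_right
    fun hba => haQ (hQ.2 _ _ hb (hPQ hba))

end IsIrr

theorem isUp_phi (a : H) : IsUp imp one (phi imp one a) :=
  ⟨fun _ hP => hP.1, fun _ _ hP hQ hPQ => ⟨hQ, hPQ hP.2⟩⟩

theorem isUp_himp (U V : Set (Set H)) : IsUp imp one (himp imp one U V) :=
  ⟨fun _ hP => hP.1, fun _ _ hP hQ hPQ => ⟨hQ, fun R hR hQR => hP.2 R hR (hPQ.trans hQR)⟩⟩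

theorem phi_imp (hH : IsHilbert imp one) (a b : H) :
    phi imp one (imp a b) = himp imp one (phi imp one a) (phi imp one b) := by
  ext P
  refine ⟨fun ⟨hP, hab⟩ => ⟨hP, fun Q hQ hPQ ⟨_, ha⟩ => ⟨hQ, hQ.1.2 a b ha (hPQ hab)⟩⟩,
    fun ⟨hP, h⟩ => ⟨hP, ?_⟩⟩
  by_contra hab
  obtain ⟨Q, hQ, hPQ, ha, hb⟩ := hP.1.exists_isIrr_of_imp_notMem hH hab
  exact hb (h Q hQ hPQ ⟨hQ, ha⟩).2

theorem phi_zero (hbot : ∀ a : H, imp zero a = one) : phi imp one zero = ∅ :=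
  Set.eq_empty_of_forall_notMem fun _ hP => hP.1.zero_notMem hbot hP.2

theorem mem_himp_himp_empty {U : Set (Set H)} {P : Set H} :
    P ∈ himp imp one (himp imp one U ∅) ∅ ↔
      IsIrr imp one P ∧ ∀ Q, IsIrr imp one Q → P ⊆ Q → ∃ R, IsIrr imp one R ∧ Q ⊆ R ∧ R ∈ U := by
  simp only [himp, Set.mem_ofPred_eq, Set.mem_empty_iff_false, imp_false, not_and, not_forall,
    not_not, exists_prop]
  exact and_congr_right fun _ => forall₃_congr fun Q hQ _ => by tauto

theorem himp_himp_inter {U V : Set (Set H)} (hU : IsUp imp one U) :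
    himp imp one (himp imp one (U ∩ V) ∅) ∅ =
      himp imp one (himp imp one U ∅) ∅ ∩ himp imp one (himp imp one V ∅) ∅ := by
  ext P
  simp only [Set.mem_inter_iff, mem_himp_himp_empty]
  constructor
  · rintro ⟨hP, h⟩
    exact ⟨⟨hP, fun Q hQ hPQ => (h Q hQ hPQ).imp fun R hR => ⟨hR.1, hR.2.1, hR.2.2.1⟩⟩,
      ⟨hP, fun Q hQ hPQ => (h Q hQ hPQ).imp fun R hR => ⟨hR.1, hR.2.1, hR.2.2.2⟩⟩⟩
  · rintro ⟨⟨hP, hUP⟩, -, hVP⟩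
    refine ⟨hP, fun Q hQ hPQ => ?_⟩
    obtain ⟨R, hR, hQR, hRU⟩ := hUP Q hQ hPQ
    obtain ⟨S, hS, hRS, hSV⟩ := hVP R hR (hPQ.trans hQR)
    exact ⟨S, hS, hQR.trans hRS, hU.2 R S hRU hS hRS, hSV⟩

/-- `φ(a₁) ∩ ⋯ ∩ φ(aₙ)` for `l = [a₁, …, aₙ]`, in the form used by `gen`. -/
def interPhi (imp : H → H → H) (one : H) (l : List H) : Set (Set H) :=
  {P | IsIrr imp one P ∧ ∀ a ∈ l, a ∈ P}

theorem interPhi_cons (a : H) (l : List H) :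
    interPhi imp one (a :: l) = phi imp one a ∩ interPhi imp one l := by
  ext P
  simp only [interPhi, phi, List.forall_mem_cons, Set.mem_inter_iff, Set.mem_ofPred_eq]
  tauto

theorem interPhi_map_mono {f f' : H → H} (h : ∀ a, hle imp one (f a) (f' a)) (l : List H) :
    interPhi imp one (l.map f) ⊆ interPhi imp one (l.map f') := by
  simp only [interPhi, List.forall_mem_map]
  exact fun P ⟨hP, hf⟩ => ⟨hP, fun a ha => hP.1.mem_of_imp_eq_one (hf a ha) (h a)⟩

theorem himp_himp_interPhi (hH : IsHilbert imp one) (hbot : ∀ a : H, imp zero a = one)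
    (l : List H) :
    himp imp one (himp imp one (interPhi imp one l) ∅) ∅ =
      interPhi imp one (l.map fun a => imp (imp a zero) zero) := by
  induction l with
  | nil =>
    ext P
    simp only [mem_himp_himp_empty, interPhi, List.map_nil, List.not_mem_nil, Set.mem_ofPred_eq]
    exact ⟨fun h => ⟨h.1, nofun⟩, fun h => ⟨h.1, fun Q hQ _ => ⟨Q, hQ, subset_rfl, hQ, nofun⟩⟩⟩
  | cons a l ih =>
    rw [interPhi_cons, himp_himp_inter (isUp_phi a), ih, List.map_cons, interPhi_cons,
      ← phi_zero hbot, ← phi_imp hH, ← phi_imp hH]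

theorem tpi_interPhi {g : H → H}
    (hg₁ : ∀ a b : H, hle imp one (g (imp a b)) (imp (g a) (g b)))
    (hg₂ : ∀ a : H, hle imp one a (g a)) (l : List H) :
    tpi imp one g (interPhi imp one l) = interPhi imp one (l.map g) := by
  ext P
  simp only [tpi, interPhi, List.forall_mem_map, Set.mem_ofPred_eq]
  refine ⟨fun ⟨hP, h⟩ => ⟨hP, fun a ha => ?_⟩,
    fun ⟨hP, h⟩ => ⟨hP, fun Q hQ hPQ => ⟨hQ, fun a ha => hPQ (h a ha)⟩⟩⟩
  by_contra hga
  obtain ⟨Q, hQ, hPQ, haQ⟩ := (hP.1.preimage hg₁ hg₂).exists_isIrr (c := a) hga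
  exact haQ ((h Q hQ hPQ).2 a ha)

theorem mem_of_imp_notMem_of_mem_Mx (hH : IsHilbert imp one) {l : List H} {P : Set H}
    (hP : P ∈ Mx (Xc imp one (interPhi imp one l))) {a b : H} (ha : a ∈ l)
    (hba : imp b a ∉ P) : b ∈ P := by
  obtain ⟨R, hR, hPR, hbR, haR⟩ := hP.1.1.1.exists_isIrr_of_imp_notMem hH hba
  exact (hP.2 R ⟨hR, fun hRU => haR (hRU.2 a ha)⟩ hPR) ▸ hbR

theorem exists_mem_Mx_Xc_interPhi {l : List H} {Q : Set H} (hQ : IsIrr imp one Q)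
    (hQU : Q ∉ interPhi imp one l) : ∃ M ∈ Mx (Xc imp one (interPhi imp one l)), Q ⊆ M := by
  obtain ⟨M, hQM, hM⟩ := hQ.1.exists_maximal l.finite_toSet fun h => hQU ⟨hQ, h⟩
  refine ⟨M, ⟨⟨isIrr_of_maximal hM, fun hMU => hM.prop.2 hMU.2⟩, fun R hR hMR => ?_⟩, hQM⟩
  exact hM.eq_of_subset ⟨hR.1.1, fun h => hR.2 ⟨hR.1, h⟩⟩ hMR

section Gabbay

variable {g : H → H}

theorem interPhi_subset_tpi (hg₁ : ∀ a b : H, hle imp one (g (imp a b)) (imp (g a) (g b)))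
    (hg₂ : ∀ a : H, hle imp one a (g a)) (l : List H) :
    interPhi imp one l ⊆ tpi imp one g (interPhi imp one l) := by
  rw [tpi_interPhi hg₁ hg₂]
  simpa using interPhi_map_mono (f := id) hg₂ l

theorem tpi_subset_himp_himp (hH : IsHilbert imp one) (hbot : ∀ a : H, imp zero a = one)
    (hg₁ : ∀ a b : H, hle imp one (g (imp a b)) (imp (g a) (g b)))
    (hg₂ : ∀ a : H, hle imp one a (g a))
    (hG4 : ∀ a : H, hle imp one (g a) (imp (imp a zero) zero)) (l : List H) :
    tpi imp one g (interPhi imp one l) ⊆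
      himp imp one (himp imp one (interPhi imp one l) ∅) ∅ := by
  rw [tpi_interPhi hg₁ hg₂, himp_himp_interPhi hH hbot]
  exact interPhi_map_mono hG4 l

theorem himp_himp_inter_Mx_subset_tpi (hH : IsHilbert imp one)
    (hbot : ∀ a : H, imp zero a = one)
    (hg₁ : ∀ a b : H, hle imp one (g (imp a b)) (imp (g a) (g b)))
    (hg₂ : ∀ a : H, hle imp one a (g a))
    (hG5 : ∀ a : H, hle imp one (imp (g a) a) (imp (imp (imp a zero) zero) a)) (l : List H) :
    himp imp one (himp imp one (interPhi imp one l) ∅) ∅ ∩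
        Mx (Xc imp one (interPhi imp one l)) ⊆ tpi imp one g (interPhi imp one l) := by
  rw [himp_himp_interPhi hH hbot, tpi_interPhi hg₁ hg₂]
  rintro P ⟨⟨hP, hnn⟩, hPM⟩
  rw [List.forall_mem_map] at hnn
  refine ⟨hP, List.forall_mem_map.2 fun a ha => ?_⟩
  by_cases hga : imp (g a) a ∈ P
  · have haP : a ∈ P := hP.1.2 _ _ (hnn a ha) (hP.1.mem_of_imp_eq_one hga (hG5 a))
    exact hP.1.mem_of_imp_eq_one haP (hg₂ a)
  · exact mem_of_imp_notMem_of_mem_Mx hH hPM ha hga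

theorem tpi_subset_union_Mx (hH : IsHilbert imp one)
    (hg₁ : ∀ a b : H, hle imp one (g (imp a b)) (imp (g a) (g b)))
    (hg₂ : ∀ a : H, hle imp one a (g a))
    (hg₃ : ∀ a b : H, hle imp one (g a) (imp (imp (imp b a) b) b)) (l : List H) :
    tpi imp one g (interPhi imp one l) ⊆
      interPhi imp one l ∪ Mx (Xc imp one (interPhi imp one l)) := by
  rw [tpi_interPhi hg₁ hg₂]
  rintro P ⟨hP, hgP⟩
  by_cases hPU : P ∈ interPhi imp one l
  · exact Or.inl hPU
  refine Or.inr ⟨⟨hP, hPU⟩, fun Q ⟨hQ, hQU⟩ hPQ => ?_⟩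
  obtain ⟨a, ha, haQ⟩ : ∃ a ∈ l, a ∉ Q := by
    by_contra! h
    exact hQU ⟨hQ, h⟩
  exact hP.eq_of_subset hH hg₃ hQ.1 hPQ (List.forall_mem_map.1 hgP a ha) haQ

theorem tpi_interPhi_eq (hH : IsHilbert imp one) (hbot : ∀ a : H, imp zero a = one)
    (hg : IsFrontal imp one g)
    (hG4 : ∀ a : H, hle imp one (g a) (imp (imp a zero) zero))
    (hG5 : ∀ a : H, hle imp one (imp (g a) a) (imp (imp (imp a zero) zero) a)) (l : List H) :
    tpi imp one g (interPhi imp one l) = interPhi imp one l ∪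
      (himp imp one (himp imp one (interPhi imp one l) ∅) ∅ ∩
        Mx (Xc imp one (interPhi imp one l))) := by
  obtain ⟨hg₁, hg₂, hg₃⟩ := hg
  refine Set.Subset.antisymm (fun P hP => ?_) (Set.union_subset
    (interPhi_subset_tpi hg₁ hg₂ l) (himp_himp_inter_Mx_subset_tpi hH hbot hg₁ hg₂ hG5 l))
  exact (tpi_subset_union_Mx hH hg₁ hg₂ hg₃ l hP).imp_right
    fun hPM => ⟨tpi_subset_himp_himp hH hbot hg₁ hg₂ hG4 l hP, hPM⟩

theorem himp_tpi_subset (hH : IsHilbert imp one) (hbot : ∀ a : H, imp zero a = one)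
    (hg₁ : ∀ a b : H, hle imp one (g (imp a b)) (imp (g a) (g b)))
    (hg₂ : ∀ a : H, hle imp one a (g a))
    (hG5 : ∀ a : H, hle imp one (imp (g a) a) (imp (imp (imp a zero) zero) a)) (l : List H) :
    himp imp one (tpi imp one g (interPhi imp one l)) (interPhi imp one l) ⊆
      himp imp one (himp imp one (himp imp one (interPhi imp one l) ∅) ∅)
        (interPhi imp one l) := by
  rintro P ⟨hP, h⟩
  refine ⟨hP, fun Q hQ hPQ hQnn => ?_⟩
  by_contra hQU
  obtain ⟨M, hM, hQM⟩ := exists_mem_Mx_Xc_interPhi hQ hQU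
  have hMnn := (isUp_himp _ _).2 Q M hQnn hM.1.1 hQM
  exact hM.1.2 (h M hM.1.1 (hPQ.trans hQM)
    (himp_himp_inter_Mx_subset_tpi hH hbot hg₁ hg₂ hG5 l ⟨hMnn, hM⟩))

end Gabbay

end FH

/-- For a bounded Hilbert algebra `(H, G)` with a Gabbay function, on the
implicative semilattice `L(H)` of finite intersections of sets `φ(a)` the
extension `G^π` satisfies `G^π(U) = U ∪ (¬¬U ∩ (Uᶜ)_M)` and is a Gabbay
function: `G^π(U) ⊆ ¬¬U` and `G^π(U) ⇒ U ⊆ ¬¬U ⇒ U`. -/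
theorem stmt_19 {H : Type*} (imp : H → H → H) (one zero : H)
    (hH : FH.IsHilbert imp one) (hbot : ∀ a : H, imp zero a = one)
    (g : H → H) (hf : FH.IsFrontal imp one g)
    (hG4 : ∀ a : H, FH.hle imp one (g a) (imp (imp a zero) zero))
    (hG5 : ∀ a : H, FH.hle imp one (imp (g a) a)
      (imp (imp (imp a zero) zero) a)) :
    ∀ U, FH.gen imp one U →
      (FH.tpi imp one g U =
        U ∪ (FH.himp imp one (FH.himp imp one U ∅) ∅ ∩ FH.Mx (FH.Xc imp one U))) ∧
      (FH.tpi imp one g U ⊆ FH.himp imp one (FH.himp imp one U ∅) ∅) ∧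
      (FH.himp imp one (FH.tpi imp one g U) U ⊆
        FH.himp imp one (FH.himp imp one (FH.himp imp one U ∅) ∅) U) := by
  rintro U ⟨l, -, rfl⟩
  exact ⟨FH.tpi_interPhi_eq hH hbot hf hG4 hG5 l,
    FH.tpi_subset_himp_himp hH hbot hf.1 hf.2.1 hG4 l,
    FH.himp_tpi_subset hH hbot hf.1 hf.2.1 hG5 l⟩
end
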